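/- Let μ be a finite positive Borel measure on ℝ whose support is a compact set containing infinitely many points, let 1 < p < ∞ and n ∈ ℕ, and let P_{n+1,p} be the unique monic real polynomial of degree n+1 minimizing ∫ |P(x)|^p dμ(x) among monic real polynomials of degree n+1. Then every zero of P_{n+1,p} is simple; that is, P_{n+1,p} has no multiple roots (over ℂ). -/

import Mathlib

open MeasureTheory Polynomial Filter

/-- The (topological) support of a Borel measure on `ℝ`. -/
def measureSupport (μ : Measure ℝ) : Set ℝ :=
  {x : ℝ | ∀ U : Set ℝ, IsOpen U → x ∈ U → μ U ≠ 0}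

/-!
If `(X - z)²` divides `P` over `ℂ`, then `P = D * Q` with the real quadratic `D(x) = |x - z|²`,
which is nonnegative on `ℝ`. Since `deg Q < deg P`, every `P + t Q` is again monic of degree
`n + 1`, so `t ↦ ∫ |P + t Q|^p dμ` is minimal at `t = 0` and its derivative
`p ∫ |P|^(p-2) P Q dμ` vanishes. But `|P|^(p-2) P Q = |P|^(p-2) D Q²` is nonnegative and positive
off the finitely many zeros of `P`, a set of positive measure because the support is infinite.
-/

lemma measureSupport_eq_support (μ : Measure ℝ) : measureSupport μ = μ.support := by
  ext x
  simp only [measureSupport, Measure.support_eq_forall_isOpen, Set.mem_ofPred_eq, pos_iff_ne_zero]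
  exact ⟨fun h U hxU hU => h U hU hxU, fun h U hU hxU => h U hxU hU⟩

lemma continuous_abs_rpow_sub_two_mul_self {p : ℝ} (hp : 1 < p) :
    Continuous fun y : ℝ => |y| ^ (p - 2) * y := by
  have hderiv : deriv (fun y : ℝ => ‖y‖ ^ p) = fun y => p * |y| ^ (p - 2) * y :=
    funext fun y => (hasDerivAt_abs_rpow y hp).deriv
  have hcont := (contDiff_norm_rpow (E := ℝ) hp).continuous_deriv le_rfl
  rw [hderiv] at hcont
  convert hcont.const_mul p⁻¹ using 2 with y
  field_simp [(by linarith : p ≠ 0)]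

lemma abs_abs_rpow_sub_two_mul_self {p : ℝ} (hp : 1 < p) (y : ℝ) :
    |(|y| ^ (p - 2) * y)| = |y| ^ (p - 1) := by
  rcases eq_or_ne y 0 with rfl | hy
  · simp [Real.zero_rpow (by linarith : p - 1 ≠ 0)]
  · rw [abs_mul, abs_of_nonneg (by positivity), show p - 1 = p - 2 + 1 by ring,
      Real.rpow_add_one (abs_ne_zero.2 hy)]

section CompactSupport

variable {X : Type*} [TopologicalSpace X] [T2Space X] [HereditarilyLindelofSpace X]
  [MeasurableSpace X] [OpensMeasurableSpace X] {μ : Measure X} [IsFiniteMeasureOnCompacts μ]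

lemma Continuous.integrable_of_isCompact_measure_support (hμ : IsCompact μ.support)
    {f : X → ℝ} (hf : Continuous f) : Integrable f μ := by
  rw [← Measure.restrict_eq_self_of_ae_mem (Measure.support_mem_ae (μ := μ))]
  exact hf.continuousOn.integrableOn_compact hμ

theorem hasDerivAt_integral_abs_add_mul_rpow (hμ : IsCompact μ.support) {f g : X → ℝ}
    (hf : Continuous f) (hg : Continuous g) {p : ℝ} (hp : 1 < p) :
    HasDerivAt (fun t => ∫ x, |f x + t * g x| ^ p ∂μ)
      (p * ∫ x, |f x| ^ (p - 2) * f x * g x ∂μ) 0 := by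
  have hcont : ∀ t, Continuous fun x => |f x + t * g x| ^ p := fun t =>
    ((hf.add (continuous_const.mul hg)).abs).rpow_const fun _ => Or.inr (by linarith)
  have hderiv : ∀ x t, HasDerivAt (fun t => |f x + t * g x| ^ p)
      (p * |f x + t * g x| ^ (p - 2) * (f x + t * g x) * g x) t := fun x t =>
    (hasDerivAt_abs_rpow _ hp).comp t ((hasDerivAt_mul_const (g x)).const_add (f x))
  have hbound : ∀ x, ∀ t ∈ Metric.ball (0 : ℝ) 1,
      ‖p * |f x + t * g x| ^ (p - 2) * (f x + t * g x) * g x‖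
        ≤ p * (|f x| + |g x|) ^ (p - 1) * |g x| := by
    intro x t ht
    have ht1 : |t| ≤ 1 := by simpa [Real.dist_eq] using (Metric.mem_ball.1 ht).le
    have hsum : |f x + t * g x| ≤ |f x| + |g x| := by
      calc |f x + t * g x| ≤ |f x| + |t| * |g x| := by rw [← abs_mul]; exact abs_add_le _ _
        _ ≤ |f x| + |g x| := by nlinarith [abs_nonneg (g x)]
    rw [Real.norm_eq_abs, mul_assoc p, abs_mul, abs_mul, abs_abs_rpow_sub_two_mul_self hp,
      abs_of_pos (by linarith : 0 < p)]
    gcongr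
  have hF' : Continuous fun x => p * |f x| ^ (p - 2) * f x * g x := by
    have h : Continuous fun x => |f x| ^ (p - 2) * f x :=
      (continuous_abs_rpow_sub_two_mul_self hp).comp hf
    have h' : Continuous fun x => p * (|f x| ^ (p - 2) * f x) * g x :=
      (continuous_const.mul h).mul hg
    simpa only [mul_assoc] using h'
  obtain ⟨-, h⟩ := hasDerivAt_integral_of_dominated_loc_of_deriv_le
    (Metric.ball_mem_nhds (0 : ℝ) one_pos)
    (Eventually.of_forall fun t => (hcont t).aestronglyMeasurable)
    ((hcont 0).integrable_of_isCompact_measure_support hμ)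
    (by simpa using hF'.aestronglyMeasurable) (Eventually.of_forall hbound)
    ((continuous_const.mul (((hf.abs.add hg.abs).rpow_const fun _ => Or.inr (by linarith)))).mul
      hg.abs |>.integrable_of_isCompact_measure_support hμ)
    (Eventually.of_forall fun x t _ => hderiv x t)
  simpa [mul_assoc, integral_const_mul] using h

end CompactSupport

lemma Polynomial.quadratic_dvd_of_sq_dvd_map {P : ℝ[X]} {z : ℂ}
    (h : (X - C z) ^ 2 ∣ P.map (algebraMap ℝ ℂ)) : X ^ 2 - C (2 * z.re) * X + C (‖z‖ ^ 2) ∣ P := by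
  by_cases hz : z.im = 0
  · have hzre : z = (z.re : ℂ) := Complex.ext rfl (by simpa using hz)
    have hnorm : ‖z‖ ^ 2 = z.re ^ 2 := by
      rw [Complex.sq_norm, Complex.normSq_apply, hz]
      ring
    have hsq : X ^ 2 - C (2 * z.re) * X + C (‖z‖ ^ 2) = (X - C z.re) ^ 2 := by
      rw [hnorm, C_mul, C_pow, map_ofNat C 2]
      ring
    rw [hsq, ← map_dvd_map' (algebraMap ℝ ℂ)]
    simpa [← hzre] using h
  · refine P.quadratic_dvd_of_aeval_eq_zero_im_ne_zero ?_ hz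
    rw [aeval_def, ← eval_map]
    exact dvd_iff_isRoot.1 ((dvd_pow_self _ two_ne_zero).trans h)

lemma Complex.eval_quadratic_eq_norm_sq (z : ℂ) (x : ℝ) :
    (X ^ 2 - C (2 * z.re) * X + C (‖z‖ ^ 2)).eval x = ‖(x : ℂ) - z‖ ^ 2 := by
  simp only [eval_add, eval_sub, eval_mul, eval_pow, eval_X, eval_C, Complex.sq_norm,
    Complex.normSq_apply, Complex.sub_re, Complex.sub_im, Complex.ofReal_re, Complex.ofReal_im]
  ring

lemma Polynomial.measure_setOf_eval_ne_zero_pos {μ : Measure ℝ} (hμ : μ.support.Infinite)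
    {P : ℝ[X]} (hP : P ≠ 0) : 0 < μ {x | P.eval x ≠ 0} := by
  refine pos_iff_ne_zero.2 fun h => hμ ((P.finite_setOfPred_isRoot hP).subset ?_)
  refine Measure.support_subset_of_isClosed (isClosed_eq P.continuous continuous_const) ?_
  rw [mem_ae_iff, Set.compl_ofPred]
  simpa using h

theorem Polynomial.Monic.integral_abs_rpow_sub_two_mul_mul_eq_zero_of_le {P : ℝ[X]}
    (hPmonic : P.Monic) {μ : Measure ℝ} [IsFiniteMeasureOnCompacts μ] (hμ : IsCompact μ.support)
    {p : ℝ} (hp : 1 < p)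
    (hPmin : ∀ R : ℝ[X], R.Monic → R.natDegree = P.natDegree →
      ∫ x, |P.eval x| ^ p ∂μ ≤ ∫ x, |R.eval x| ^ p ∂μ)
    {Q : ℝ[X]} (hQ : Q.natDegree < P.natDegree) :
    ∫ x, |P.eval x| ^ (p - 2) * P.eval x * Q.eval x ∂μ = 0 := by
  have hlt : ∀ t : ℝ, (t • Q).degree < P.degree := fun t =>
    (degree_smul_le t Q).trans_lt (degree_lt_degree hQ)
  have hmin : IsLocalMin (fun t : ℝ => ∫ x, |P.eval x + t * Q.eval x| ^ p ∂μ) 0 :=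
    Eventually.of_forall fun t => by
      simpa using hPmin (P + t • Q) (hPmonic.add_of_left (hlt t))
        (natDegree_add_eq_left_of_degree_lt (hlt t))
  have h := hmin.hasDerivAt_eq_zero
    (hasDerivAt_integral_abs_add_mul_rpow hμ P.continuous Q.continuous hp)
  exact (mul_eq_zero.1 h).resolve_left (by linarith)

theorem integral_abs_rpow_sub_two_mul_mul_pos {μ : Measure ℝ} [IsFiniteMeasureOnCompacts μ]
    (hμ : IsCompact μ.support) (hinf : μ.support.Infinite) {p : ℝ} (hp : 1 < p)
    {D Q : ℝ[X]} (hD : ∀ x, 0 ≤ D.eval x) (hDQ : D * Q ≠ 0) :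
    0 < ∫ x, |(D * Q).eval x| ^ (p - 2) * (D * Q).eval x * Q.eval x ∂μ := by
  have hnonneg : ∀ x, 0 ≤ |(D * Q).eval x| ^ (p - 2) * (D * Q).eval x * Q.eval x := fun x => by
    rw [eval_mul, show ∀ a d q : ℝ, a * (d * q) * q = a * (d * q ^ 2) by intros; ring]
    exact mul_nonneg (by positivity) (mul_nonneg (hD x) (sq_nonneg _))
  have hcont : Continuous fun x => |(D * Q).eval x| ^ (p - 2) * (D * Q).eval x * Q.eval x :=
    ((continuous_abs_rpow_sub_two_mul_self hp).comp (D * Q).continuous).mul Q.continuous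
  rw [integral_pos_iff_support_of_nonneg hnonneg (hcont.integrable_of_isCompact_measure_support hμ)]
  refine (measure_setOf_eval_ne_zero_pos hinf hDQ).trans_le (measure_mono fun x hx => ?_)
  have hQx : Q.eval x ≠ 0 := right_ne_zero_of_mul (by rwa [← eval_mul])
  exact mul_ne_zero (mul_ne_zero (Real.rpow_pos_of_pos (abs_pos.2 hx) _).ne' hx) hQx

/-- All zeros of the monic polynomial of degree `n+1` of minimal `L^p(μ)`-norm are simple:
for every complex number `z`, the square `(X - z)^2` does not divide `P` over `ℂ`. -/
theorem zeros_of_minimizer_are_simple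
    (μ : Measure ℝ) [IsFiniteMeasure μ]
    (hcomp : IsCompact (measureSupport μ))
    (hinf : (measureSupport μ).Infinite)
    (p : ℝ) (hp1 : 1 < p) (n : ℕ)
    (P : Polynomial ℝ) (hPmonic : P.Monic) (hPdeg : P.natDegree = n + 1)
    (hPmin : ∀ Q : Polynomial ℝ, Q.Monic → Q.natDegree = n + 1 →
      ∫ x, |P.eval x| ^ p ∂μ ≤ ∫ x, |Q.eval x| ^ p ∂μ) :
    ∀ z : ℂ, ¬ ((X - C z) ^ 2 ∣ P.map (algebraMap ℝ ℂ)) := by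
  intro z hz
  rw [measureSupport_eq_support] at hcomp hinf
  obtain ⟨Q, rfl⟩ := quadratic_dvd_of_sq_dvd_map hz
  set D : ℝ[X] := X ^ 2 - C (2 * z.re) * X + C (‖z‖ ^ 2) with hD
  have hPne : D * Q ≠ 0 := hPmonic.ne_zero
  have hQdeg : Q.natDegree < (D * Q).natDegree := by
    have hDdeg : D.natDegree = 2 := by rw [hD]; compute_degree!
    rw [natDegree_mul (left_ne_zero_of_mul hPne) (right_ne_zero_of_mul hPne), hDdeg]
    omega
  have hzero := hPmonic.integral_abs_rpow_sub_two_mul_mul_eq_zero_of_le hcomp hp1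
    (fun R hR hRdeg => hPmin R hR (hRdeg.trans hPdeg)) hQdeg
  have hpos := integral_abs_rpow_sub_two_mul_mul_pos hcomp hinf hp1
    (fun x => by rw [hD, z.eval_quadratic_eq_norm_sq x]; positivity) hPne
  exact hpos.ne' hzero
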